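/- arXiv:2506.10652 — 6 statements merged into one kernel-verified Lean document; each statement's English description precedes it below -/
import Mathlib

section
/- For every natural number s ≥ 1 and every integer ℓ with 1 ≤ ℓ ≤ 4s+1, one has Q_{2s}^ℓ(4s+1) < 0, where Q_{2s}^ℓ(m) = (1/2^{4s})·∏_{j=1}^s (m-4j)²(m+4j-4)² − ∏_{j=1}^{2s} (2j+ℓ-2)(2j-ℓ-m). -/
open Finset

private lemma keyA (s : ℕ) :
    ∏ j ∈ Finset.Icc 1 s,
        (((4 * s + 1 : ℝ)) - 4 * j) ^ 2 * (((4 * s + 1 : ℝ)) + 4 * j - 4) ^ 2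
      = ∏ j ∈ Finset.Icc 1 (2 * s), (4 * (j : ℝ) - 3) ^ 2 := by
  rw [← Finset.Ico_add_one_right_eq_Icc, ← Finset.Ico_add_one_right_eq_Icc, Finset.prod_Ico_eq_prod_range,
    Finset.prod_Ico_eq_prod_range]
  have h1 : s + 1 - 1 = s := by omega
  have h2 : 2 * s + 1 - 1 = s + s := by omega
  rw [h1, h2, Finset.prod_range_add,
    ← Finset.prod_range_reflect (fun i => (4 * ((1 + i : ℕ) : ℝ) - 3) ^ 2) s,
    ← Finset.prod_mul_distrib]
  apply Finset.prod_congr rfl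
  intro i hi
  simp only [Finset.mem_range] at hi
  have hc : ((s - 1 - i : ℕ) : ℝ) = (s : ℝ) - 1 - i := by
    rw [Nat.sub_sub, Nat.cast_sub (by omega)]
    push_cast
    ring
  push_cast [hc]
  ring

private lemma keyB (s : ℕ) :
    ∏ j ∈ Finset.Icc 1 (2 * s), ((4 * s + 2 : ℝ) - 2 * j)
      = ∏ j ∈ Finset.Icc 1 (2 * s), (2 * (j : ℝ)) := by
  rw [← Finset.Ico_add_one_right_eq_Icc, Finset.prod_Ico_eq_prod_range, Finset.prod_Ico_eq_prod_range]
  have h2 : 2 * s + 1 - 1 = 2 * s := by omega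
  rw [h2, ← Finset.prod_range_reflect (fun i => ((4 * s + 2 : ℝ) - 2 * ((1 + i : ℕ) : ℝ))) (2 * s)]
  apply Finset.prod_congr rfl
  intro i hi
  simp only [Finset.mem_range] at hi
  have hc : ((2 * s - 1 - i : ℕ) : ℝ) = 2 * (s : ℝ) - 1 - i := by
    rw [Nat.sub_sub, Nat.cast_sub (by omega)]
    push_cast
    ring
  push_cast [hc]
  ring

theorem stmt_2 (s ℓ : ℕ) (hs : 1 ≤ s) (hℓ : 1 ≤ ℓ) (hℓ' : ℓ ≤ 4 * s + 1) :
    (1 / 2 ^ (4 * s) : ℝ) *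
        ∏ j ∈ Finset.Icc 1 s,
          (((4 * s + 1 : ℝ)) - 4 * j) ^ 2 * (((4 * s + 1 : ℝ)) + 4 * j - 4) ^ 2 -
      ∏ j ∈ Finset.Icc 1 (2 * s),
        ((2 * (j : ℝ) + ℓ - 2) * (2 * (j : ℝ) - ℓ - (4 * s + 1))) < 0 := by
  have hne : (Finset.Icc 1 (2 * s)).Nonempty := by
    rw [Finset.nonempty_Icc]; omega
  have hcard : (Finset.Icc 1 (2 * s)).card = 2 * s := by
    rw [Nat.card_Icc]; omega
  -- rewrite the second product with positive factors
  have hP2 : ∏ j ∈ Finset.Icc 1 (2 * s),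
        ((2 * (j : ℝ) + ℓ - 2) * (2 * (j : ℝ) - ℓ - (4 * s + 1)))
      = ∏ j ∈ Finset.Icc 1 (2 * s),
        ((2 * (j : ℝ) + ℓ - 2) * ((ℓ : ℝ) + 4 * s + 1 - 2 * j)) := by
    have : ∀ j ∈ Finset.Icc 1 (2 * s),
        (2 * (j : ℝ) + ℓ - 2) * (2 * (j : ℝ) - ℓ - (4 * s + 1))
          = (-1) * ((2 * (j : ℝ) + ℓ - 2) * ((ℓ : ℝ) + 4 * s + 1 - 2 * j)) := by
      intro j _; ring
    rw [Finset.prod_congr rfl this, Finset.prod_mul_distrib, Finset.prod_const, hcard,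
      pow_mul]
    norm_num
  -- lower bound for the second product
  have hQle : ∏ j ∈ Finset.Icc 1 (2 * s), ((2 * (j : ℝ) - 1) * ((4 * s + 2 : ℝ) - 2 * j))
      ≤ ∏ j ∈ Finset.Icc 1 (2 * s),
        ((2 * (j : ℝ) + ℓ - 2) * ((ℓ : ℝ) + 4 * s + 1 - 2 * j)) := by
    apply Finset.prod_le_prod
    · intro j hj
      simp only [Finset.mem_Icc] at hj
      have h1 : (1 : ℝ) ≤ j := by exact_mod_cast hj.1
      have h2 : (j : ℝ) ≤ 2 * s := by exact_mod_cast hj.2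
      nlinarith
    · intro j hj
      simp only [Finset.mem_Icc] at hj
      have h1 : (1 : ℝ) ≤ j := by exact_mod_cast hj.1
      have h2 : (j : ℝ) ≤ 2 * s := by exact_mod_cast hj.2
      have hl1 : (1 : ℝ) ≤ ℓ := by exact_mod_cast hℓ
      nlinarith
  -- key strict inequality
  have hkey : (1 / 2 ^ (4 * s) : ℝ) *
      ∏ j ∈ Finset.Icc 1 s,
        (((4 * s + 1 : ℝ)) - 4 * j) ^ 2 * (((4 * s + 1 : ℝ)) + 4 * j - 4) ^ 2
      < ∏ j ∈ Finset.Icc 1 (2 * s), ((2 * (j : ℝ) - 1) * ((4 * s + 2 : ℝ) - 2 * j)) := by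
    rw [keyA, one_div, inv_mul_lt_iff₀ (by positivity : (0:ℝ) < 2 ^ (4 * s))]
    have hRHS : (2 : ℝ) ^ (4 * s) *
        ∏ j ∈ Finset.Icc 1 (2 * s), ((2 * (j : ℝ) - 1) * ((4 * s + 2 : ℝ) - 2 * j))
        = ∏ j ∈ Finset.Icc 1 (2 * s), ((4 * (j : ℝ) - 2) * (4 * j)) := by
      rw [Finset.prod_mul_distrib, keyB]
      have h4 : (2 : ℝ) ^ (4 * s) = (4 : ℝ) ^ (2 * s) := by
        rw [show (4 : ℝ) = 2 ^ 2 by norm_num, ← pow_mul]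
        ring_nf
      have h5 : (4 : ℝ) ^ (2 * s) = ∏ _x ∈ Finset.Icc 1 (2 * s), (4 : ℝ) := by
        rw [Finset.prod_const, hcard]
      rw [h4, h5, ← Finset.prod_mul_distrib, ← Finset.prod_mul_distrib]
      apply Finset.prod_congr rfl
      intro j _
      ring
    rw [hRHS]
    apply Finset.prod_lt_prod_of_nonempty _ _ hne
    · intro j hj
      simp only [Finset.mem_Icc] at hj
      have h1 : (1 : ℝ) ≤ j := by exact_mod_cast hj.1
      nlinarith
    · intro j hj
      simp only [Finset.mem_Icc] at hj
      have h1 : (1 : ℝ) ≤ j := by exact_mod_cast hj.1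
      nlinarith
  rw [sub_neg, hP2]
  exact lt_of_lt_of_le hkey hQle
end

section
/- Let s, ℓ ≥ 1 be natural numbers and let N > 4s+1 be an integer. If Q_{2s}^ℓ(N) ≥ 0 then Q_{2s}^ℓ(N+1) > 0, where Q_{2s}^ℓ(m) = ∏_{j=1}^{2s} (m/2 + 2(j-1) - 2s)² − ∏_{j=1}^{2s} (ℓ+2j-2)(m+ℓ-4s+2j-2). -/
lemma stmt_9_aux (c x y : ℝ) (hc : 0 < c) (hx : 0 < x) (hxy : x < y) :
    c * (y + 1) * x ^ 2 < (x + 1/2) ^ 2 * (c * y) := by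
  nlinarith [mul_pos hc (mul_pos hx (sub_pos.mpr hxy)), mul_pos hc (mul_pos hx hx),
    mul_pos hc (hx.trans hxy)]

theorem stmt_9 (s ℓ : ℕ) (hs : 1 ≤ s) (hℓ : 1 ≤ ℓ) (N : ℤ) (hN : (4 * s + 1 : ℤ) < N)
    (Q : ℤ → ℝ)
    (hQ : ∀ m : ℤ, Q m =
      ∏ j ∈ Finset.Icc 1 (2 * s), ((m : ℝ) / 2 + 2 * ((j : ℝ) - 1) - 2 * s) ^ 2 -
        ∏ j ∈ Finset.Icc 1 (2 * s),
          (((ℓ : ℝ) + 2 * j - 2) * ((m : ℝ) + ℓ - 4 * s + 2 * j - 2)))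
    (h : 0 ≤ Q N) : 0 < Q (N + 1) := by
  have hNr : (4 * (s:ℝ) + 2) ≤ (N:ℝ) := by exact_mod_cast (by omega : (4*(s:ℤ)+2) ≤ N)
  have hℓr : (1:ℝ) ≤ (ℓ:ℝ) := by exact_mod_cast hℓ
  have hne : (Finset.Icc 1 (2*s)).Nonempty := ⟨1, by simp; omega⟩
  have facts : ∀ j ∈ Finset.Icc 1 (2*s),
      (0:ℝ) < (N:ℝ)/2 + 2*((j:ℝ)-1) - 2*s ∧
      (0:ℝ) < (ℓ:ℝ) + 2*j - 2 ∧
      (N:ℝ)/2 + 2*((j:ℝ)-1) - 2*s < (N:ℝ) + ℓ - 4*s + 2*j - 2 := by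
    intro j hj
    simp only [Finset.mem_Icc] at hj
    have hj1 : (1:ℝ) ≤ (j:ℝ) := by exact_mod_cast hj.1
    refine ⟨by nlinarith, by nlinarith, by nlinarith⟩
  have key : (∏ j ∈ Finset.Icc 1 (2*s),
      (((ℓ:ℝ) + 2*j - 2) * (((N:ℝ)+1) + ℓ - 4*s + 2*j - 2))) *
      (∏ j ∈ Finset.Icc 1 (2*s), (((N:ℝ)/2 + 2*((j:ℝ)-1) - 2*s)^2)) <
    (∏ j ∈ Finset.Icc 1 (2*s), ((((N:ℝ)+1)/2 + 2*((j:ℝ)-1) - 2*s)^2)) *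
      (∏ j ∈ Finset.Icc 1 (2*s),
        (((ℓ:ℝ) + 2*j - 2) * ((N:ℝ) + ℓ - 4*s + 2*j - 2))) := by
    rw [← Finset.prod_mul_distrib, ← Finset.prod_mul_distrib]
    apply Finset.prod_lt_prod_of_nonempty _ _ hne
    · intro j hj
      obtain ⟨hx, hc, hxy⟩ := facts j hj
      have hy1 : (0:ℝ) < ((N:ℝ)+1) + ℓ - 4*s + 2*j - 2 := by nlinarith
      exact mul_pos (mul_pos hc hy1) (pow_pos hx 2)
    · intro j hj
      obtain ⟨hx, hc, hxy⟩ := facts j hj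
      have := stmt_9_aux ((ℓ:ℝ) + 2*j - 2) ((N:ℝ)/2 + 2*((j:ℝ)-1) - 2*s)
        ((N:ℝ) + ℓ - 4*s + 2*j - 2) hc hx hxy
      calc (((ℓ:ℝ) + 2*j - 2) * (((N:ℝ)+1) + ℓ - 4*s + 2*j - 2)) *
            (((N:ℝ)/2 + 2*((j:ℝ)-1) - 2*s)^2)
          = ((ℓ:ℝ) + 2*j - 2) * (((N:ℝ) + ℓ - 4*s + 2*j - 2) + 1) *
            (((N:ℝ)/2 + 2*((j:ℝ)-1) - 2*s))^2 := by ring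
        _ < (((N:ℝ)/2 + 2*((j:ℝ)-1) - 2*s) + 1/2)^2 *
            (((ℓ:ℝ) + 2*j - 2) * ((N:ℝ) + ℓ - 4*s + 2*j - 2)) := this
        _ = ((((N:ℝ)+1)/2 + 2*((j:ℝ)-1) - 2*s)^2) *
            (((ℓ:ℝ) + 2*j - 2) * ((N:ℝ) + ℓ - 4*s + 2*j - 2)) := by ring
  have hB0 : (0:ℝ) < ∏ j ∈ Finset.Icc 1 (2*s),
      (((ℓ:ℝ) + 2*j - 2) * ((N:ℝ) + ℓ - 4*s + 2*j - 2)) := by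
    apply Finset.prod_pos
    intro j hj
    obtain ⟨hx, hc, hxy⟩ := facts j hj
    exact mul_pos hc (hx.trans hxy)
  have hB1 : (0:ℝ) < ∏ j ∈ Finset.Icc 1 (2*s),
      (((ℓ:ℝ) + 2*j - 2) * (((N:ℝ)+1) + ℓ - 4*s + 2*j - 2)) := by
    apply Finset.prod_pos
    intro j hj
    obtain ⟨hx, hc, hxy⟩ := facts j hj
    exact mul_pos hc (by nlinarith)
  have hQN := hQ N
  have hQN1 := hQ (N+1)
  push_cast at hQN hQN1
  rw [hQN] at h
  rw [hQN1]
  -- h : B0 ≤ A0 ; key : B1 * A0 < A1 * B0 ; want B1 < A1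
  have hA0 : (∏ j ∈ Finset.Icc 1 (2*s), (((ℓ:ℝ) + 2*j - 2) * ((N:ℝ) + ℓ - 4*s + 2*j - 2))) ≤
      ∏ j ∈ Finset.Icc 1 (2*s), ((N:ℝ)/2 + 2*((j:ℝ)-1) - 2*s)^2 := by linarith
  have h1 := (mul_le_mul_of_nonneg_left hA0 hB1.le).trans_lt key
  have h2 := lt_of_mul_lt_mul_right h1 hB0.le
  linarith
end

section
/- For natural numbers k, ℓ, m with ℓ ≤ m and m ≥ 2 one has Q_k^{ℓ+1}(m) − Q_k^ℓ(m) < 0, where Q_k^ℓ is defined via Q_{2s}^ℓ(m) = (1/2^{4s})∏_{j=1}^s (m-4j)²(m+4j-4)² − ∏_{j=1}^{2s}(2j+ℓ-2)(2j-ℓ-m) for k = 2s (assuming m ≥ 2k+1). -/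
theorem stmt_11 (s ℓ m : ℕ) (hs : 1 ≤ s) (hℓ : 1 ≤ ℓ) (hℓm : ℓ ≤ m)
    (hm : 4 * s + 1 ≤ m) :
    ((1 / 2 ^ (4 * s) : ℝ) *
        ∏ j ∈ Finset.Icc 1 s, ((m : ℝ) - 4 * j) ^ 2 * ((m : ℝ) + 4 * j - 4) ^ 2 -
      ∏ j ∈ Finset.Icc 1 (2 * s),
        ((2 * (j : ℝ) + (ℓ + 1 : ℕ) - 2) * (2 * (j : ℝ) - (ℓ + 1 : ℕ) - m))) -
    ((1 / 2 ^ (4 * s) : ℝ) *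
        ∏ j ∈ Finset.Icc 1 s, ((m : ℝ) - 4 * j) ^ 2 * ((m : ℝ) + 4 * j - 4) ^ 2 -
      ∏ j ∈ Finset.Icc 1 (2 * s),
        ((2 * (j : ℝ) + ℓ - 2) * (2 * (j : ℝ) - ℓ - m))) < 0 := by
  set S := Finset.Icc 1 (2 * s) with hS
  have hcard : S.card = 2 * s := by simp [hS]
  have key : ∀ ℓ' : ℕ,
      ∏ j ∈ S, ((2 * (j : ℝ) + ℓ' - 2) * (2 * (j : ℝ) - ℓ' - m))
        = ∏ j ∈ S, ((2 * (j : ℝ) + ℓ' - 2) * ((m : ℝ) + ℓ' - 2 * j)) := by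
    intro ℓ'
    calc ∏ j ∈ S, ((2 * (j : ℝ) + ℓ' - 2) * (2 * (j : ℝ) - ℓ' - m))
        = ∏ j ∈ S, (-1) * ((2 * (j : ℝ) + ℓ' - 2) * ((m : ℝ) + ℓ' - 2 * j)) := by
          apply Finset.prod_congr rfl; intro j _; ring
      _ = (-1 : ℝ) ^ S.card * ∏ j ∈ S, ((2 * (j : ℝ) + ℓ' - 2) * ((m : ℝ) + ℓ' - 2 * j)) := by
          rw [Finset.prod_mul_distrib, Finset.prod_const]
      _ = _ := by rw [hcard, pow_mul]; norm_num
  rw [key ℓ, key (ℓ + 1)]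
  have hlt : ∏ j ∈ S, ((2 * (j : ℝ) + ℓ - 2) * ((m : ℝ) + ℓ - 2 * j))
      < ∏ j ∈ S, ((2 * (j : ℝ) + (ℓ + 1 : ℕ) - 2) * ((m : ℝ) + (ℓ + 1 : ℕ) - 2 * j)) := by
    apply Finset.prod_lt_prod_of_nonempty
    · intro j hj
      rw [hS, Finset.mem_Icc] at hj
      have h1 : (1 : ℝ) ≤ j := by exact_mod_cast hj.1
      have h2 : (j : ℝ) ≤ 2 * s := by exact_mod_cast hj.2
      have h3 : (1 : ℝ) ≤ ℓ := by exact_mod_cast hℓ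
      have h4 : (4 * s + 1 : ℝ) ≤ m := by exact_mod_cast hm
      have hs' : (1 : ℝ) ≤ s := by exact_mod_cast hs
      nlinarith
    · intro j hj
      rw [hS, Finset.mem_Icc] at hj
      have h1 : (1 : ℝ) ≤ j := by exact_mod_cast hj.1
      have h2 : (j : ℝ) ≤ 2 * s := by exact_mod_cast hj.2
      have h3 : (1 : ℝ) ≤ ℓ := by exact_mod_cast hℓ
      have h4 : (4 * s + 1 : ℝ) ≤ m := by exact_mod_cast hm
      push_cast
      nlinarith
    · refine ⟨1, ?_⟩
      rw [hS, Finset.mem_Icc]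
      omega
  linarith
end

section
/- Fix a real m ≥ 5 and set L = 1 − m/2 + (1/2)√(20 − 8m + m² + (m−4)√(m²+16)). Define Q_2^ℓ(m) = (1/16)m²(m−4)² − ℓ(ℓ+2)(m+ℓ−2)(m+ℓ−4). Then for all real ℓ with 1 ≤ ℓ ≤ L one has Q_2^ℓ(m) ≥ 0, and for all real ℓ with L < ℓ ≤ m one has Q_2^ℓ(m) < 0. -/
theorem stmt_12 (m : ℝ) (hm : 5 ≤ m)
    (L : ℝ)
    (hL : L = 1 - m / 2 +
      (1 / 2) * Real.sqrt (20 - 8 * m + m ^ 2 + (m - 4) * Real.sqrt (m ^ 2 + 16))) :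
    (∀ ℓ : ℝ, 1 ≤ ℓ → ℓ ≤ L →
        (1 / 16) * m ^ 2 * (m - 4) ^ 2 - ℓ * (ℓ + 2) * (m + ℓ - 2) * (m + ℓ - 4) ≥ 0) ∧
    (∀ ℓ : ℝ, L < ℓ → ℓ ≤ m →
        (1 / 16) * m ^ 2 * (m - 4) ^ 2 - ℓ * (ℓ + 2) * (m + ℓ - 2) * (m + ℓ - 4) < 0) := by
  set s := Real.sqrt (m ^ 2 + 16) with hs_def
  have hs0 : 0 ≤ s := Real.sqrt_nonneg _
  have hs2 : s ^ 2 = m ^ 2 + 16 := Real.sq_sqrt (by positivity)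
  have hs4 : 4 ≤ s := by nlinarith
  have hinner : 0 ≤ 20 - 8 * m + m ^ 2 + (m - 4) * s := by nlinarith
  set r := Real.sqrt (20 - 8 * m + m ^ 2 + (m - 4) * s) with hr_def
  have hr0 : 0 ≤ r := Real.sqrt_nonneg _
  have hr2 : r ^ 2 = 20 - 8 * m + m ^ 2 + (m - 4) * s := Real.sq_sqrt hinner
  have hL' : L = 1 - m / 2 + r / 2 := by rw [hL]; ring
  have hrm : m - 2 ≤ r := by nlinarith
  have hL0 : 0 ≤ L := by rw [hL']; linarith
  have htL : L ^ 2 + (m - 2) * L = (m - 4) * (s - 4) / 4 := by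
    rw [hL']; linear_combination hr2 / 4
  have hkey : (1 / 16) * m ^ 2 * (m - 4) ^ 2
      = ((m - 4) * (s - 4) / 4) * ((m - 4) * (s - 4) / 4 + 2 * m - 8) := by
    linear_combination (-(m - 4) ^ 2 / 16) * hs2
  have hId : ∀ ℓ : ℝ, (1 / 16) * m ^ 2 * (m - 4) ^ 2 - ℓ * (ℓ + 2) * (m + ℓ - 2) * (m + ℓ - 4)
      = (L - ℓ) * (L + ℓ + m - 2) * ((L ^ 2 + (m - 2) * L) + (ℓ ^ 2 + (m - 2) * ℓ) + 2 * m - 8) := by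
    intro ℓ
    linear_combination hkey -
      (L ^ 2 + (m - 2) * L + (m - 4) * (s - 4) / 4 + 2 * m - 8) * htL
  have htL0 : 0 ≤ L ^ 2 + (m - 2) * L := by rw [htL]; nlinarith
  constructor
  · intro ℓ h1 h2
    rw [ge_iff_le, hId ℓ]
    apply mul_nonneg (mul_nonneg (by linarith) (by linarith))
    nlinarith
  · intro ℓ h1 h2
    rw [hId ℓ]
    have hA : (0:ℝ) < ℓ - L := by linarith
    have hP1 : (0:ℝ) < L + ℓ + m - 2 := by linarith
    have hℓ0 : (0:ℝ) < ℓ := by linarith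
    have hP2 : (0:ℝ) < (L ^ 2 + (m - 2) * L) + (ℓ ^ 2 + (m - 2) * ℓ) + 2 * m - 8 := by
      nlinarith
    have h := mul_pos (mul_pos hA hP1) hP2
    have heq : (L - ℓ) * (L + ℓ + m - 2) *
        ((L ^ 2 + (m - 2) * L) + (ℓ ^ 2 + (m - 2) * ℓ) + 2 * m - 8)
        = -((ℓ - L) * (L + ℓ + m - 2) *
        ((L ^ 2 + (m - 2) * L) + (ℓ ^ 2 + (m - 2) * ℓ) + 2 * m - 8)) := by ring
    rw [heq]
    linarith
end

section
/- For every real m ≥ 5, the quantity L = 1 − m/2 + (1/2)√(20 − 8m + m² + (m−4)√(m²+16)) satisfies L ≤ (√2 − 1)(m/2 − 1) < m. -/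
theorem stmt_13 (m : ℝ) (hm : 5 ≤ m) :
    1 - m / 2 +
        (1 / 2) * Real.sqrt (20 - 8 * m + m ^ 2 + (m - 4) * Real.sqrt (m ^ 2 + 16)) ≤
      (Real.sqrt 2 - 1) * (m / 2 - 1) ∧ (Real.sqrt 2 - 1) * (m / 2 - 1) < m := by
  set s := Real.sqrt (m ^ 2 + 16) with hs
  have hs0 : 0 ≤ s := Real.sqrt_nonneg _
  have hs2 : s ^ 2 = m ^ 2 + 16 := Real.sq_sqrt (by positivity)
  have hpos : 0 < (m ^ 2 - 12) + (m - 4) * s := by nlinarith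
  have hkey : (m - 4) * s ≤ m ^ 2 - 12 := by
    nlinarith [mul_nonneg (by linarith : (0:ℝ) ≤ m - 5) (sq_nonneg (m - 1))]
  have hA : 20 - 8 * m + m ^ 2 + (m - 4) * s ≤ 2 * (m - 2) ^ 2 := by nlinarith
  have hA0 : (0:ℝ) ≤ 20 - 8 * m + m ^ 2 + (m - 4) * s := by nlinarith
  have hsq : Real.sqrt (20 - 8 * m + m ^ 2 + (m - 4) * s) ≤ Real.sqrt 2 * (m - 2) := by
    calc Real.sqrt (20 - 8 * m + m ^ 2 + (m - 4) * s)
        ≤ Real.sqrt (2 * (m - 2) ^ 2) := Real.sqrt_le_sqrt hA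
      _ = Real.sqrt 2 * (m - 2) := by
          rw [Real.sqrt_mul (by norm_num), Real.sqrt_sq (by linarith)]
  have h2 : Real.sqrt 2 < 2 := by
    nlinarith [Real.sq_sqrt (by norm_num : (0:ℝ) ≤ 2), Real.sqrt_nonneg 2]
  constructor
  · have hid : (Real.sqrt 2 - 1) * (m / 2 - 1)
        = (1 / 2) * (Real.sqrt 2 * (m - 2)) - (m / 2 - 1) := by ring
    rw [hid]; linarith
  · nlinarith [Real.sqrt_nonneg 2]
end

section
/- For all natural numbers s ≥ 1 and m ≥ 4s+1, setting ℓ = m in Q_{2s}^ℓ(m) = ∏_{j=1}^{2s}(m/2 + 2(j−1) − 2s)² − 2^{2s}∏_{j=1}^{2s}(m+2j−2)(m−j), one has Q_{2s}^m(m) < 0. -/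
theorem stmt_18 (s m : ℕ) (hs : 1 ≤ s) (hm : 4 * s + 1 ≤ m) :
    ∏ j ∈ Finset.Icc 1 (2 * s), ((m : ℝ) / 2 + 2 * ((j : ℝ) - 1) - 2 * s) ^ 2 -
      2 ^ (2 * s) *
        ∏ j ∈ Finset.Icc 1 (2 * s), (((m : ℝ) + 2 * j - 2) * ((m : ℝ) - j)) < 0 := by
  have h2s : (Finset.Icc 1 (2 * s)).Nonempty := by
    rw [Finset.nonempty_Icc]; omega
  have hcard : (Finset.Icc 1 (2 * s)).card = 2 * s := by
    rw [Nat.card_Icc]; omega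
  have key : ∏ j ∈ Finset.Icc 1 (2 * s), ((m : ℝ) / 2 + 2 * ((j : ℝ) - 1) - 2 * s) ^ 2
      < ∏ j ∈ Finset.Icc 1 (2 * s), (2 * (((m : ℝ) + 2 * j - 2) * ((m : ℝ) - j))) := by
    apply Finset.prod_lt_prod_of_nonempty _ _ h2s
    · intro i hi
      obtain ⟨h1, h2⟩ := Finset.mem_Icc.mp hi
      have hm' : (4 * s + 1 : ℝ) ≤ m := by exact_mod_cast hm
      have hi1 : (1 : ℝ) ≤ i := by exact_mod_cast h1
      have hi2 : (i : ℝ) ≤ 2 * s := by exact_mod_cast h2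
      have hs' : (1 : ℝ) ≤ s := by exact_mod_cast hs
      have hpos : 0 < (m : ℝ) / 2 + 2 * ((i : ℝ) - 1) - 2 * s := by nlinarith
      positivity
    · intro i hi
      obtain ⟨h1, h2⟩ := Finset.mem_Icc.mp hi
      have hm' : (4 * s + 1 : ℝ) ≤ m := by exact_mod_cast hm
      have hi1 : (1 : ℝ) ≤ i := by exact_mod_cast h1
      have hi2 : (i : ℝ) ≤ 2 * s := by exact_mod_cast h2
      have hs' : (1 : ℝ) ≤ s := by exact_mod_cast hs
      nlinarith [sq_nonneg ((m : ℝ) - 4 * s), sq_nonneg ((i : ℝ) - 1), sq_nonneg ((m : ℝ) - 2 * i), sq_nonneg ((s : ℝ) - i)]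
  rw [Finset.prod_mul_distrib, Finset.prod_const, hcard] at key
  linarith
end
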